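/- Every quadtree (balanced or not) can be properly colored with 4 colors under edge adjacency; that is, for every quadtree Q there exists a function f : Q → Fin 4 such that f(s) ≠ f(t) whenever s and t are edge-adjacent squares of Q. -/

import Mathlib

/-- A dyadic square `[i/2^k, (i+1)/2^k] × [j/2^k, (j+1)/2^k] ⊆ [0,1]²`,
recorded by its level `k` and coordinates `i, j < 2^k`. -/
structure DyadicSquare where
  k : ℕ
  i : ℕ
  j : ℕ
  hi : i < 2 ^ k
  hj : j < 2 ^ k
deriving DecidableEq

namespace DyadicSquare

/-- The subset of the plane occupied by a dyadic square. -/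
def region (s : DyadicSquare) : Set (ℝ × ℝ) :=
  Set.Icc ((s.i : ℝ) / 2 ^ s.k) (((s.i : ℝ) + 1) / 2 ^ s.k) ×ˢ
    Set.Icc ((s.j : ℝ) / 2 ^ s.k) (((s.j : ℝ) + 1) / 2 ^ s.k)

/-- Two squares are edge-adjacent if they are distinct and their intersection
contains more than one point (a segment of positive length). -/
def EdgeAdj (s t : DyadicSquare) : Prop :=
  s ≠ t ∧ (s.region ∩ t.region).Nontrivial

/-- Two squares are corner-adjacent if they are distinct and their intersection
is nonempty (they share at least a corner point or part of an edge). -/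
def CornerAdj (s t : DyadicSquare) : Prop :=
  s ≠ t ∧ (s.region ∩ t.region).Nonempty

end DyadicSquare

/-- A finite set of dyadic squares has pairwise disjoint interiors. -/
def PairwiseDisjointInteriors (Q : Finset DyadicSquare) : Prop :=
  (Q : Set DyadicSquare).Pairwise fun s t =>
    interior s.region ∩ interior t.region = ∅

/-- A quadtree: a finite set of dyadic squares with pairwise disjoint interiors
whose union is the unit square `[0,1]²`. -/
def IsQuadtree (Q : Finset DyadicSquare) : Prop :=
  PairwiseDisjointInteriors Q ∧
    (⋃ s ∈ Q, s.region) = Set.Icc (0 : ℝ) 1 ×ˢ Set.Icc (0 : ℝ) 1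

/-- A quadtree is balanced if any two edge-adjacent squares have side lengths
(`2^{-k}`) within a factor of two of each other. -/
def IsBalanced (Q : Finset DyadicSquare) : Prop :=
  ∀ s ∈ Q, ∀ t ∈ Q, DyadicSquare.EdgeAdj s t → s.k ≤ t.k + 1 ∧ t.k ≤ s.k + 1

/-!
Induction on the total level `∑ k` of the quadtree. Let `P` be the parent of a square of maximal
level. A member of the quadtree overlapping `P` either lies in `P` or contains `P`, and the latter
is impossible since it would swallow that deepest square; so replacing the squares inside `P` by
`P` gives a quadtree of smaller total level, which we colour by induction. The children of `P` of
even checkerboard parity take the colour of `P`: any neighbour they have outside `P` is a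
neighbour of `P`. An odd child `c` is deepest, so a neighbour of `c` is no smaller than `c` and
contains one of the four grid neighbours of `c`; two of these are the even siblings, so `c` has at
most two neighbours outside `P`, and a fourth colour is left for it. Children of equal parity are
diagonal, hence not edge-adjacent.
-/

open Set

namespace DyadicSquare

attribute [ext] DyadicSquare

def dyadicInterval (k a : ℕ) : Set ℝ := Icc ((a : ℝ) / 2 ^ k) (((a : ℝ) + 1) / 2 ^ k)

lemma region_eq (s : DyadicSquare) :
    s.region = dyadicInterval s.k s.i ×ˢ dyadicInterval s.k s.j := rfl

section DyadicInterval

variable {k d a b : ℕ}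

lemma natCast_div_two_pow_eq (k d n : ℕ) :
    (n : ℝ) / 2 ^ k = ((n * 2 ^ d : ℕ) : ℝ) / 2 ^ (k + d) := by
  push_cast
  rw [pow_add, mul_div_mul_right _ _ (by positivity)]

lemma natCast_div_two_pow_le_iff {m n : ℕ} : (m : ℝ) / 2 ^ k ≤ (n : ℝ) / 2 ^ k ↔ m ≤ n := by
  rw [div_le_div_iff_of_pos_right (by positivity), Nat.cast_le]

lemma natCast_div_two_pow_lt_iff {m n : ℕ} : (m : ℝ) / 2 ^ k < (n : ℝ) / 2 ^ k ↔ m < n := by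
  rw [div_lt_div_iff_of_pos_right (by positivity), Nat.cast_lt]

lemma interior_dyadicInterval (k a : ℕ) :
    interior (dyadicInterval k a) = Ioo ((a : ℝ) / 2 ^ k) (((a : ℝ) + 1) / 2 ^ k) :=
  interior_Icc

lemma interior_dyadicInterval_nonempty (k a : ℕ) : (interior (dyadicInterval k a)).Nonempty := by
  rw [interior_dyadicInterval, nonempty_Ioo, ← Nat.cast_add_one, natCast_div_two_pow_lt_iff]
  exact a.lt_succ_self

lemma dyadicInterval_subset (h : a / 2 ^ d = b) :
    dyadicInterval (k + d) a ⊆ dyadicInterval k b := by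
  have hP : 0 < 2 ^ d := by positivity
  rw [Nat.div_eq_iff hP] at h
  apply Icc_subset_Icc
  · rw [natCast_div_two_pow_eq k d, natCast_div_two_pow_le_iff]
    exact h.1
  · rw [← Nat.cast_add_one, ← Nat.cast_add_one, natCast_div_two_pow_eq k d,
      natCast_div_two_pow_le_iff, add_one_mul]
    omega

lemma interior_dyadicInterval_inter_nonempty_iff :
    (interior (dyadicInterval (k + d) a) ∩ interior (dyadicInterval k b)).Nonempty ↔
      a / 2 ^ d = b := by
  refine ⟨fun ⟨x, hxa, hxb⟩ => ?_, fun h => ?_⟩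
  · rw [interior_dyadicInterval] at hxa hxb
    have h₁ := hxa.1.trans hxb.2
    have h₂ := hxb.1.trans hxa.2
    rw [← Nat.cast_add_one, natCast_div_two_pow_eq k d, natCast_div_two_pow_lt_iff] at h₁ h₂
    exact Nat.div_eq_of_lt_le (by omega) h₁
  · obtain ⟨x, hx⟩ := interior_dyadicInterval_nonempty (k + d) a
    exact ⟨x, hx, interior_mono (dyadicInterval_subset h) hx⟩

lemma interior_dyadicInterval_inter_nonempty_of_ne {l : ℕ} {x y : ℝ}
    (hx : x ∈ dyadicInterval k a ∩ dyadicInterval l b)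
    (hy : y ∈ dyadicInterval k a ∩ dyadicInterval l b) (hxy : x ≠ y) :
    (interior (dyadicInterval k a) ∩ interior (dyadicInterval l b)).Nonempty := by
  wlog hlt : x < y generalizing x y
  · exact this hy hx hxy.symm (lt_of_le_of_ne (not_lt.1 hlt) hxy.symm)
  obtain ⟨z, hxz, hzy⟩ := exists_between hlt
  simp only [interior_dyadicInterval]
  exact ⟨z, ⟨hx.1.1.trans_lt hxz, hzy.trans_le hy.1.2⟩, ⟨hx.2.1.trans_lt hxz, hzy.trans_le hy.2.2⟩⟩

lemma exists_adjacent_of_inter_nonempty (hb : b < 2 ^ k)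
    (h : (dyadicInterval (k + d) a ∩ dyadicInterval k b).Nonempty) (hne : a / 2 ^ d ≠ b) :
    ∃ a', a' < 2 ^ (k + d) ∧ (a' = a + 1 ∨ a' + 1 = a) ∧ a' / 2 ^ d = b := by
  obtain ⟨x, hxa, hxb⟩ := h
  have h₁ := hxa.1.trans hxb.2
  have h₂ := hxb.1.trans hxa.2
  rw [← Nat.cast_add_one, natCast_div_two_pow_eq k d, natCast_div_two_pow_le_iff] at h₁ h₂
  have hP : 0 < 2 ^ d := by positivity
  have hbk : b * 2 ^ d + 2 ^ d ≤ 2 ^ (k + d) := by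
    rw [pow_add, ← Nat.succ_mul]
    exact Nat.mul_le_mul_right _ hb
  rw [Ne, Nat.div_eq_iff hP] at hne
  rw [add_one_mul] at h₁
  rcases lt_or_ge a (b * 2 ^ d) with hlt | hge
  · refine ⟨a + 1, by omega, Or.inl rfl, ?_⟩
    rw [Nat.div_eq_iff hP]
    omega
  · refine ⟨a - 1, by omega, Or.inr (by omega), ?_⟩
    rw [Nat.div_eq_iff hP]
    omega

end DyadicInterval

def root : DyadicSquare := ⟨0, 0, 0, Nat.one_pos, Nat.one_pos⟩

lemma region_root : root.region = Icc 0 1 ×ˢ Icc 0 1 := by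
  simp [root, region]

def IsSubsquare (s t : DyadicSquare) : Prop :=
  ∃ d, s.k = t.k + d ∧ s.i / 2 ^ d = t.i ∧ s.j / 2 ^ d = t.j

def IsGridNeighbor (s u : DyadicSquare) : Prop :=
  u.k = s.k ∧ (u.i = s.i ∧ (u.j = s.j + 1 ∨ u.j + 1 = s.j) ∨
    u.j = s.j ∧ (u.i = s.i + 1 ∨ u.i + 1 = s.i))

variable {s t u : DyadicSquare}

lemma interior_region (s : DyadicSquare) :
    interior s.region = interior (dyadicInterval s.k s.i) ×ˢ interior (dyadicInterval s.k s.j) :=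
  interior_prod_eq _ _

lemma interior_region_nonempty (s : DyadicSquare) : (interior s.region).Nonempty := by
  rw [interior_region]
  exact (interior_dyadicInterval_nonempty _ _).prod (interior_dyadicInterval_nonempty _ _)

lemma interior_inter_nonempty_of_region_subset (hs : u.region ⊆ s.region)
    (ht : u.region ⊆ t.region) : (interior s.region ∩ interior t.region).Nonempty :=
  let ⟨p, hp⟩ := interior_region_nonempty u
  ⟨p, interior_mono hs hp, interior_mono ht hp⟩

lemma IsSubsquare.region_subset (h : IsSubsquare s t) : s.region ⊆ t.region := by
  obtain ⟨d, hd, hi, hj⟩ := h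
  rw [region_eq, region_eq, hd]
  exact prod_mono (dyadicInterval_subset hi) (dyadicInterval_subset hj)

lemma IsSubsquare.eq_of_k_eq (h : IsSubsquare s t) (hk : s.k = t.k) : s = t := by
  obtain ⟨d, hd, hi, hj⟩ := h
  obtain rfl : d = 0 := by omega
  ext <;> simp_all

lemma isSubsquare_root (s : DyadicSquare) : IsSubsquare s root :=
  ⟨s.k, (zero_add _).symm, Nat.div_eq_of_lt s.hi, Nat.div_eq_of_lt s.hj⟩

lemma isSubsquare_iff_of_k_eq_succ (h : s.k = t.k + 1) :
    IsSubsquare s t ↔ s.i / 2 = t.i ∧ s.j / 2 = t.j := by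
  refine ⟨fun ⟨d, hd, hi, hj⟩ => ?_, fun hij => ⟨1, h, hij⟩⟩
  obtain rfl : d = 1 := by omega
  exact ⟨hi, hj⟩

lemma interior_inter_nonempty_iff (hd : s.k = t.k + d) :
    (interior s.region ∩ interior t.region).Nonempty ↔ s.i / 2 ^ d = t.i ∧ s.j / 2 ^ d = t.j := by
  rw [interior_region, interior_region, prod_inter_prod, prod_nonempty_iff, hd,
    interior_dyadicInterval_inter_nonempty_iff, interior_dyadicInterval_inter_nonempty_iff]

lemma isSubsquare_of_interior_inter_nonempty (hk : t.k ≤ s.k)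
    (h : (interior s.region ∩ interior t.region).Nonempty) : IsSubsquare s t :=
  let ⟨d, hd⟩ := Nat.exists_eq_add_of_le hk
  ⟨d, hd, (interior_inter_nonempty_iff hd).1 h⟩

lemma EdgeAdj.symm (h : s.EdgeAdj t) : t.EdgeAdj s :=
  ⟨h.1.symm, inter_comm s.region t.region ▸ h.2⟩

lemma exists_isGridNeighbor_isSubsquare (hk : t.k ≤ s.k)
    (hdisj : interior s.region ∩ interior t.region = ∅) (hst : (s.region ∩ t.region).Nontrivial) :
    ∃ u, IsGridNeighbor s u ∧ IsSubsquare u t := by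
  obtain ⟨d, hd⟩ := Nat.exists_eq_add_of_le hk
  have hnot := (interior_inter_nonempty_iff hd).not.1 (not_nonempty_iff_eq_empty.2 hdisj)
  obtain ⟨p, ⟨hps, hpt⟩, q, ⟨hqs, hqt⟩, hpq⟩ := hst
  rw [region_eq, hd] at hps hqs
  rcases not_and_or.1 (mt Prod.ext_iff.2 hpq) with hx | hy
  · have hi := interior_dyadicInterval_inter_nonempty_iff.1 <|
      interior_dyadicInterval_inter_nonempty_of_ne ⟨hps.1, hpt.1⟩ ⟨hqs.1, hqt.1⟩ hx
    obtain ⟨j, hjk, hj, hjt⟩ :=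
      exists_adjacent_of_inter_nonempty t.hj ⟨p.2, hps.2, hpt.2⟩ fun hj => hnot ⟨hi, hj⟩
    exact ⟨⟨s.k, s.i, j, s.hi, hd ▸ hjk⟩, ⟨rfl, Or.inl ⟨rfl, hj⟩⟩, ⟨d, hd, hi, hjt⟩⟩
  · have hj := interior_dyadicInterval_inter_nonempty_iff.1 <|
      interior_dyadicInterval_inter_nonempty_of_ne ⟨hps.2, hpt.2⟩ ⟨hqs.2, hqt.2⟩ hy
    obtain ⟨i, hik, hi, hit⟩ :=
      exists_adjacent_of_inter_nonempty t.hi ⟨p.1, hps.1, hpt.1⟩ fun hi => hnot ⟨hi, hj⟩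
    exact ⟨⟨s.k, i, s.j, hd ▸ hik, s.hj⟩, ⟨rfl, Or.inr ⟨rfl, hi⟩⟩, ⟨d, hd, hit, hj⟩⟩

lemma isGridNeighbor_of_edgeAdj_of_k_eq (hk : s.k = t.k) (h : s.EdgeAdj t) :
    IsGridNeighbor s t := by
  have hdisj : interior s.region ∩ interior t.region = ∅ := not_nonempty_iff_eq_empty.1 fun hst =>
    h.1 ((isSubsquare_of_interior_inter_nonempty hk.ge hst).eq_of_k_eq hk)
  obtain ⟨u, hu, hut⟩ := exists_isGridNeighbor_isSubsquare hk.ge hdisj h.2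
  rwa [← hut.eq_of_k_eq (hu.1.trans hk)]

lemma IsGridNeighbor.parity_ne (h : IsGridNeighbor s u) : (s.i + s.j) % 2 ≠ (u.i + u.j) % 2 := by
  obtain ⟨-, h⟩ := h
  omega

-- A child of `P` has at most one grid neighbour outside `P` on each axis through it.
lemma IsGridNeighbor.eq_of_not_isSubsquare {c P u₁ u₂ : DyadicSquare} (hcP : IsSubsquare c P)
    (hck : c.k = P.k + 1) (h₁ : IsGridNeighbor c u₁) (h₂ : IsGridNeighbor c u₂)
    (hu₁ : ¬IsSubsquare u₁ P) (hu₂ : ¬IsSubsquare u₂ P) (hdir : u₁.i = c.i ↔ u₂.i = c.i) :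
    u₁ = u₂ := by
  rw [isSubsquare_iff_of_k_eq_succ hck] at hcP
  rw [isSubsquare_iff_of_k_eq_succ (h₁.1.trans hck)] at hu₁
  rw [isSubsquare_iff_of_k_eq_succ (h₂.1.trans hck)] at hu₂
  obtain ⟨hk₁, h₁⟩ := h₁
  obtain ⟨hk₂, h₂⟩ := h₂
  ext <;> omega

end DyadicSquare

open DyadicSquare

def IsProperColoring {α : Type*} (Q : Finset DyadicSquare) (f : DyadicSquare → α) : Prop :=
  ∀ s ∈ Q, ∀ t ∈ Q, s.EdgeAdj t → f s ≠ f t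

lemma exists_ne_forall_ne_of_card_lt {α β : Type*} [Fintype β] (S : Finset α) (f : α → β)
    (x : β) (hS : S.card + 1 < Fintype.card β) : ∃ y, y ≠ x ∧ ∀ t ∈ S, f t ≠ y := by
  classical
  obtain ⟨y, -, hy⟩ := Finset.exists_mem_notMem_of_card_lt_card
    (s := insert x (S.image f)) (t := Finset.univ) <| by
      have := Finset.card_insert_le x (S.image f)
      have := S.card_image_le (f := f)
      rw [Finset.card_univ]
      omega
  exact ⟨y, fun h => hy (h ▸ Finset.mem_insert_self _ _),
    fun t ht h => hy (Finset.mem_insert_of_mem (h ▸ Finset.mem_image_of_mem f ht))⟩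

namespace PairwiseDisjointInteriors

variable {Q : Finset DyadicSquare} {s t u P : DyadicSquare}

lemma eq_of_region_subset (hQ : PairwiseDisjointInteriors Q) (hs : s ∈ Q) (ht : t ∈ Q)
    (hus : u.region ⊆ s.region) (hut : u.region ⊆ t.region) : s = t := by
  by_contra hst
  simpa [hQ hs ht hst] using interior_inter_nonempty_of_region_subset hus hut

lemma isSubsquare_of_interior_inter_nonempty (hQ : PairwiseDisjointInteriors Q) (hs : s ∈ Q)
    (hsP : IsSubsquare s P) (ht : t ∈ Q) (h : (interior P.region ∩ interior t.region).Nonempty) :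
    IsSubsquare t P := by
  rcases le_total P.k t.k with hk | hk
  · exact DyadicSquare.isSubsquare_of_interior_inter_nonempty hk (inter_comm _ _ ▸ h)
  · have hPt := DyadicSquare.isSubsquare_of_interior_inter_nonempty hk h
    obtain rfl := hQ.eq_of_region_subset hs ht subset_rfl
      (hsP.region_subset.trans hPt.region_subset)
    exact hsP

end PairwiseDisjointInteriors

def IsParentOfDeepest (Q : Finset DyadicSquare) (P : DyadicSquare) : Prop :=
  (∃ s ∈ Q, IsSubsquare s P ∧ s.k = P.k + 1) ∧ ∀ t ∈ Q, t.k ≤ P.k + 1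

open Classical in
noncomputable def merge (Q : Finset DyadicSquare) (P : DyadicSquare) : Finset DyadicSquare :=
  insert P (Q.filter fun t => ¬IsSubsquare t P)

lemma exists_isParentOfDeepest {Q : Finset DyadicSquare} (h : ∃ t ∈ Q, t.k ≠ 0) :
    ∃ P, IsParentOfDeepest Q P := by
  obtain ⟨t, ht, htk⟩ := h
  obtain ⟨s, hs, hmax⟩ := Q.exists_max_image DyadicSquare.k ⟨t, ht⟩
  obtain ⟨m, hm⟩ : ∃ m, s.k = m + 1 := Nat.exists_eq_add_of_le' (by have := hmax t ht; omega)
  have hlt : ∀ {a}, a < 2 ^ s.k → a / 2 < 2 ^ m := fun ha => by rw [hm, pow_succ] at ha; omega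
  refine ⟨⟨m, s.i / 2, s.j / 2, hlt s.hi, hlt s.hj⟩,
    ⟨s, hs, (isSubsquare_iff_of_k_eq_succ hm).2 ⟨rfl, rfl⟩, hm⟩, fun u hu => hm ▸ hmax u hu⟩

lemma mem_merge {Q : Finset DyadicSquare} {P t : DyadicSquare} :
    t ∈ merge Q P ↔ t = P ∨ t ∈ Q ∧ ¬IsSubsquare t P := by
  simp [merge]

namespace IsParentOfDeepest

variable {Q : Finset DyadicSquare} {P c t : DyadicSquare}

lemma notMem (hQ : PairwiseDisjointInteriors Q) (hP : IsParentOfDeepest Q P) : P ∉ Q := by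
  obtain ⟨s, hs, hsP, hsk⟩ := hP.1
  intro hPQ
  obtain rfl := hQ.eq_of_region_subset hs hPQ subset_rfl hsP.region_subset
  omega

lemma k_eq_of_isSubsquare (hQ : PairwiseDisjointInteriors Q) (hP : IsParentOfDeepest Q P)
    (ht : t ∈ Q) (htP : IsSubsquare t P) : t.k = P.k + 1 := by
  obtain ⟨d, hd, -⟩ := id htP
  have := hP.2 t ht
  by_contra hne
  exact hP.notMem hQ (htP.eq_of_k_eq (by omega) ▸ ht)

lemma isQuadtree_merge (hQ : IsQuadtree Q) (hP : IsParentOfDeepest Q P) :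
    IsQuadtree (merge Q P) := by
  obtain ⟨s, hs, hsP, -⟩ := hP.1
  refine ⟨?_, Subset.antisymm ?_ ?_⟩
  · have hcoe : (merge Q P : Set DyadicSquare) = insert P {t | t ∈ Q ∧ ¬IsSubsquare t P} := by
      ext
      simp [mem_merge]
    rw [PairwiseDisjointInteriors, hcoe, Set.pairwise_insert]
    refine ⟨hQ.1.mono fun t ht => ht.1, fun t ht _ => ?_⟩
    have h : interior P.region ∩ interior t.region = ∅ := not_nonempty_iff_eq_empty.1 fun h =>
      ht.2 (hQ.1.isSubsquare_of_interior_inter_nonempty hs hsP ht.1 h)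
    exact ⟨h, inter_comm (interior t.region) _ ▸ h⟩
  · refine iUnion₂_subset fun t _ => ?_
    rw [← region_root]
    exact (isSubsquare_root t).region_subset
  · rw [← hQ.2]
    refine iUnion₂_subset fun t ht => ?_
    by_cases htP : IsSubsquare t P
    · exact htP.region_subset.trans (subset_biUnion_of_mem (u := region) (mem_merge.2 (.inl rfl)))
    · exact subset_biUnion_of_mem (u := region) (mem_merge.2 (.inr ⟨ht, htP⟩))

lemma sum_k_merge_lt (hQ : PairwiseDisjointInteriors Q) (hP : IsParentOfDeepest Q P) :
    ∑ t ∈ merge Q P, t.k < ∑ t ∈ Q, t.k := by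
  classical
  obtain ⟨s, hs, hsP, hsk⟩ := hP.1
  rw [merge, Finset.sum_insert fun h => hP.notMem hQ (Finset.mem_filter.1 h).1,
    ← Finset.sum_filter_add_sum_filter_not Q (IsSubsquare · P)]
  have : s.k ≤ ∑ t ∈ Q with IsSubsquare t P, t.k :=
    Finset.single_le_sum (fun _ _ => Nat.zero_le _) (Finset.mem_filter.2 ⟨hs, hsP⟩)
  omega

lemma card_le_two_of_forall_edgeAdj (hQ : PairwiseDisjointInteriors Q)
    (hP : IsParentOfDeepest Q P) (hc : c ∈ Q) (hcP : IsSubsquare c P) {N : Finset DyadicSquare}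
    (hN : ∀ t ∈ N, t ∈ Q ∧ ¬IsSubsquare t P ∧ t.EdgeAdj c) : N.card ≤ 2 := by
  have hck := hP.k_eq_of_isSubsquare hQ hc hcP
  obtain ⟨s, hs, hsP, -⟩ := hP.1
  have key : ∀ t ∈ N, ∃ u, IsGridNeighbor c u ∧ ¬IsSubsquare u P ∧ u.region ⊆ t.region := by
    intro t ht
    obtain ⟨htQ, htP, htc⟩ := hN t ht
    obtain ⟨u, hu, hut⟩ := exists_isGridNeighbor_isSubsquare (hck ▸ hP.2 t htQ)
      (hQ hc htQ htc.1.symm) htc.symm.2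
    refine ⟨u, hu, fun huP => htP ?_, hut.region_subset⟩
    exact hQ.isSubsquare_of_interior_inter_nonempty hs hsP htQ
      (interior_inter_nonempty_of_region_subset huP.region_subset hut.region_subset)
  have : Nonempty DyadicSquare := ⟨c⟩
  choose! w hw using key
  calc N.card ≤ (Finset.univ : Finset Bool).card :=
        Finset.card_le_card_of_injOn (fun t => decide ((w t).i = c.i))
          (fun _ _ => Finset.mem_coe.2 (Finset.mem_univ _)) ?_
    _ = 2 := rfl
  intro t₁ ht₁ t₂ ht₂ h
  have hw₁ := hw t₁ ht₁
  have hw₂ := hw t₂ ht₂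
  have hu : w t₁ = w t₂ := hw₁.1.eq_of_not_isSubsquare hcP hck hw₂.1 hw₁.2.1 hw₂.2.1
    (by simpa using h)
  exact hQ.eq_of_region_subset (hN t₁ ht₁).1 (hN t₂ ht₂).1 hw₁.2.2 (hu ▸ hw₂.2.2)

lemma exists_color_ne (hQ : PairwiseDisjointInteriors Q) (hP : IsParentOfDeepest Q P)
    (hc : c ∈ Q) (hcP : IsSubsquare c P) (f : DyadicSquare → Fin 4) (x : Fin 4) :
    ∃ y, y ≠ x ∧ ∀ t ∈ Q, ¬IsSubsquare t P → t.EdgeAdj c → f t ≠ y := by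
  classical
  set N := Q.filter fun t => ¬IsSubsquare t P ∧ t.EdgeAdj c
  have hN : N.card ≤ 2 :=
    hP.card_le_two_of_forall_edgeAdj hQ hc hcP fun t ht => by simpa [N, and_assoc] using ht
  obtain ⟨y, hyx, hy⟩ := exists_ne_forall_ne_of_card_lt N f x (by rw [Fintype.card_fin]; omega)
  exact ⟨y, hyx, fun t ht htP htc => hy t (Finset.mem_filter.2 ⟨ht, htP, htc⟩)⟩

lemma exists_isProperColoring (hQ : IsQuadtree Q) (hP : IsParentOfDeepest Q P)
    {f' : DyadicSquare → Fin 4} (hf' : IsProperColoring (merge Q P) f') :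
    ∃ f : DyadicSquare → Fin 4, IsProperColoring Q f := by
  classical
  choose! col hcol_ne hcol using fun c (hc : c ∈ Q) (hcP : IsSubsquare c P) =>
    hP.exists_color_ne hQ.1 hc hcP f' (f' P)
  set g : DyadicSquare → Fin 4 := fun u =>
    if IsSubsquare u P then (if (u.i + u.j) % 2 = 0 then f' P else col u) else f' u with hg
  have hPmem : P ∈ merge Q P := mem_merge.2 (.inl rfl)
  have hmem : ∀ t ∈ Q, ¬IsSubsquare t P → t ∈ merge Q P := fun t ht htP =>
    mem_merge.2 (.inr ⟨ht, htP⟩)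
  have hchild : ∀ c ∈ Q, IsSubsquare c P → ∀ t ∈ Q, c.EdgeAdj t → g c ≠ g t := by
    intro c hc hcP t ht hct
    by_cases htP : IsSubsquare t P
    · have hk :=
        (hP.k_eq_of_isSubsquare hQ.1 hc hcP).trans (hP.k_eq_of_isSubsquare hQ.1 ht htP).symm
      have hpar := (isGridNeighbor_of_edgeAdj_of_k_eq hk hct).parity_ne
      simp only [hg, if_pos hcP, if_pos htP]
      split_ifs
      · omega
      · exact (hcol_ne t ht htP).symm
      · exact hcol_ne c hc hcP
      · omega
    · simp only [hg, if_pos hcP, if_neg htP]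
      split_ifs
      · exact hf' P hPmem t (hmem t ht htP) ⟨fun h => hP.notMem hQ.1 (h ▸ ht),
          hct.2.mono (inter_subset_inter_left _ hcP.region_subset)⟩
      · exact (hcol c hc hcP t ht htP hct.symm).symm
  refine ⟨g, fun s hs t ht hst => ?_⟩
  by_cases hsP : IsSubsquare s P
  · exact hchild s hs hsP t ht hst
  by_cases htP : IsSubsquare t P
  · exact (hchild t ht htP s hs hst.symm).symm
  simp only [hg, if_neg hsP, if_neg htP]
  exact hf' s (hmem s hs hsP) t (hmem t ht htP) hst

end IsParentOfDeepest

/-- Every quadtree can be properly 4-colored under edge adjacency. -/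
theorem quadtree_four_colorable (Q : Finset DyadicSquare) (hQ : IsQuadtree Q) :
    ∃ f : DyadicSquare → Fin 4,
      ∀ s ∈ Q, ∀ t ∈ Q, DyadicSquare.EdgeAdj s t → f s ≠ f t := by
  induction h : ∑ t ∈ Q, t.k using Nat.strong_induction_on generalizing Q with
  | _ n ih =>
  by_cases hdeep : ∃ t ∈ Q, t.k ≠ 0
  · obtain ⟨P, hP⟩ := exists_isParentOfDeepest hdeep
    obtain ⟨f', hf'⟩ := ih _ (h ▸ hP.sum_k_merge_lt hQ.1) _ (hP.isQuadtree_merge hQ) rfl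
    exact hP.exists_isProperColoring hQ hf'
  · push Not at hdeep
    refine ⟨fun _ => 0, fun s hs t ht hst => absurd ?_ hst.1⟩
    rw [(isSubsquare_root s).eq_of_k_eq (hdeep s hs), (isSubsquare_root t).eq_of_k_eq (hdeep t ht)]
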